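/- arXiv:1706.07993 — 12 statements merged into one kernel-verified Lean document; each statement's English description precedes it below -/
import Mathlib

section
/- Suppose β ≠ 0. Then the heavy-ball map G is a bijection of ℝⁿ × ℝⁿ onto itself, with inverse given explicitly by G⁻¹(y₁, y₂) = (y₂, y₂ + (y₂ - y₁ - α∇f(y₂))/β). Moreover, if f is r+1 times continuously differentiable for an integer r ≥ 1, then both G and G⁻¹ are r times continuously differentiable; that is, G is a C^r diffeomorphism of ℝⁿ × ℝⁿ. -/
/-! For `β ≠ 0` the second component of `G z` recovers `z₁`, and the first component can then be
solved linearly for `z₂`; this gives the explicit inverse. Both `G` and `G⁻¹` are built from `∇f`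
by affine operations, and `∇f` is `C^r` when `f` is `C^(r+1)`, since it is `f'` transported
through the Riesz isomorphism. -/

open InnerProductSpace

section HeavyBall

variable {𝕜 E : Type*} [Field 𝕜] [AddCommGroup E] [Module 𝕜 E]

/-- The heavy-ball map with step `g` (in the application `g = α • ∇f`). -/
def heavyBallMap (g : E → E) (β : 𝕜) (z : E × E) : E × E :=
  (z.1 - g z.1 + β • (z.1 - z.2), z.1)

def heavyBallInv (g : E → E) (β : 𝕜) (y : E × E) : E × E :=
  (y.2, y.2 + β⁻¹ • (y.2 - y.1 - g y.2))

theorem heavyBallInv_leftInverse (g : E → E) {β : 𝕜} (hβ : β ≠ 0) :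
    Function.LeftInverse (heavyBallInv g β) (heavyBallMap g β) := by
  intro z
  have hdiff : z.1 - (z.1 - g z.1 + β • (z.1 - z.2)) - g z.1 = β • (z.2 - z.1) := by module
  refine Prod.ext rfl ?_
  simp only [heavyBallInv, heavyBallMap, hdiff, smul_smul, inv_mul_cancel₀ hβ, one_smul,
    add_sub_cancel]

theorem heavyBallInv_rightInverse (g : E → E) {β : 𝕜} (hβ : β ≠ 0) :
    Function.RightInverse (heavyBallInv g β) (heavyBallMap g β) := by
  intro y
  refine Prod.ext ?_ rfl
  simp only [heavyBallInv, heavyBallMap, sub_add_cancel_left, smul_neg, smul_smul,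
    mul_inv_cancel₀ hβ, one_smul]
  abel

end HeavyBall

section Smoothness

variable {E : Type*} [NormedAddCommGroup E] [NormedSpace ℝ E] {g : E → E} {k : ℕ∞}

theorem contDiff_heavyBallMap (hg : ContDiff ℝ k g) (β : ℝ) :
    ContDiff ℝ k (heavyBallMap g β) := by
  unfold heavyBallMap
  fun_prop

theorem contDiff_heavyBallInv (hg : ContDiff ℝ k g) (β : ℝ) :
    ContDiff ℝ k (heavyBallInv g β) := by
  unfold heavyBallInv
  fun_prop

end Smoothness

theorem contDiff_gradient {E : Type*} [NormedAddCommGroup E] [InnerProductSpace ℝ E]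
    [CompleteSpace E] {f : E → ℝ} {k : ℕ} (hf : ContDiff ℝ (k + 1 : ℕ) f) :
    ContDiff ℝ k (gradient f) :=
  (toDual ℝ E).symm.contDiff.comp (hf.fderiv_right (m := k) (by exact_mod_cast le_rfl))

theorem stmt_2_general (n : ℕ) (f : EuclideanSpace ℝ (Fin n) → ℝ) (α β : ℝ) (hβ : β ≠ 0)
    (r : ℕ) (hf : ContDiff ℝ (r + 1 : ℕ) f)
    (G Ginv : (EuclideanSpace ℝ (Fin n)) × (EuclideanSpace ℝ (Fin n)) →
              (EuclideanSpace ℝ (Fin n)) × (EuclideanSpace ℝ (Fin n)))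
    (hG : ∀ z, G z = (z.1 - α • gradient f z.1 + β • (z.1 - z.2), z.1))
    (hGinv : ∀ y, Ginv y = (y.2, y.2 + β⁻¹ • (y.2 - y.1 - α • gradient f y.2))) :
    Function.Bijective G ∧ Function.LeftInverse Ginv G ∧ Function.RightInverse Ginv G ∧
      ContDiff ℝ (r : ℕ) G ∧ ContDiff ℝ (r : ℕ) Ginv := by
  have hG' : G = heavyBallMap (α • gradient f) β := funext hG
  have hGinv' : Ginv = heavyBallInv (α • gradient f) β := funext hGinv
  have hstep : ContDiff ℝ r (α • gradient f) := (contDiff_gradient hf).const_smul α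
  have hli := heavyBallInv_leftInverse (α • gradient f) hβ
  have hri := heavyBallInv_rightInverse (α • gradient f) hβ
  subst hG' hGinv'
  exact ⟨⟨hli.injective, hri.surjective⟩, hli, hri,
    contDiff_heavyBallMap hstep β, contDiff_heavyBallInv hstep β⟩

/-- Suppose `β ≠ 0`. Then the heavy-ball map
`G(z₁, z₂) = (z₁ - α∇f(z₁) + β(z₁ - z₂), z₁)` is a bijection of `ℝⁿ × ℝⁿ` onto itself,
with inverse `G⁻¹(y₁, y₂) = (y₂, y₂ + (y₂ - y₁ - α∇f(y₂))/β)`. Moreover, if `f` is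
`r+1` times continuously differentiable for an integer `r ≥ 1`, then both `G` and `G⁻¹`
are `r` times continuously differentiable: `G` is a `C^r` diffeomorphism. -/
theorem stmt_2 (n : ℕ) (f : EuclideanSpace ℝ (Fin n) → ℝ) (α β : ℝ) (hβ : β ≠ 0)
    (r : ℕ) (hr : 1 ≤ r) (hf : ContDiff ℝ (r + 1 : ℕ) f)
    (G Ginv : (EuclideanSpace ℝ (Fin n)) × (EuclideanSpace ℝ (Fin n)) →
              (EuclideanSpace ℝ (Fin n)) × (EuclideanSpace ℝ (Fin n)))
    (hG : ∀ z, G z = (z.1 - α • gradient f z.1 + β • (z.1 - z.2), z.1))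
    (hGinv : ∀ y, Ginv y = (y.2, y.2 + β⁻¹ • (y.2 - y.1 - α • gradient f y.2))) :
    Function.Bijective G ∧ Function.LeftInverse Ginv G ∧ Function.RightInverse Ginv G ∧
      ContDiff ℝ (r : ℕ) G ∧ ContDiff ℝ (r : ℕ) Ginv :=
  stmt_2_general n f α β hβ r hf G Ginv hG hGinv
end

section
/- Suppose λ > 0, 0 < α < 4/λ, and β ∈ (max(-1 + αλ/2, 0), 1). Then every complex root μ ∈ ℂ of the quadratic t(μ) = μ² - (1 + β - αλ)μ + β satisfies |μ| < 1. -/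
/-! The roots of a real monic quadratic `z² + a z + b` with `b < 1` and `|a| < 1 + b` (the
Schur–Cohn conditions) lie in the open unit disc: a non-real root has `‖μ‖² = b`, being one of
a conjugate pair with product `b`, and a real root cannot lie outside `(-1, 1)` because the
quadratic is positive at `±1` and its vertex `-a/2` lies in `(-1, 1)`. For
`t(μ) = μ² - (1 + β - αλ)μ + β` these conditions read `β < 1` and `0 < αλ < 2 + 2β`. -/

theorem abs_lt_one_of_sq_add_mul_add_eq_zero {a b x : ℝ} (hb : b < 1) (ha : |a| < 1 + b)
    (hx : x ^ 2 + a * x + b = 0) : |x| < 1 := by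
  obtain ⟨ha₁, ha₂⟩ := abs_lt.mp ha
  refine abs_lt.mpr ⟨?_, ?_⟩ <;> by_contra! h
  · -- `x² + a x + b = (1 - a + b) + (x + 1)(x - 1 + a)`, a sum of a positive and a nonnegative term
    nlinarith [mul_nonneg (neg_nonneg.mpr (by linarith : x + 1 ≤ 0))
      (neg_nonneg.mpr (by linarith : x - 1 + a ≤ 0))]
  · -- `x² + a x + b = (1 + a + b) + (x - 1)(x + 1 + a)`
    nlinarith [mul_nonneg (by linarith : 0 ≤ x - 1) (by linarith : 0 ≤ x + 1 + a)]

theorem Complex.norm_lt_one_of_sq_add_mul_add_eq_zero {a b : ℝ} (hb : b < 1) (ha : |a| < 1 + b)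
    {μ : ℂ} (hμ : μ ^ 2 + a * μ + b = 0) : ‖μ‖ < 1 := by
  have hre : μ.re ^ 2 - μ.im ^ 2 + a * μ.re + b = 0 := by
    simpa [sq] using congrArg Complex.re hμ
  have him : μ.im * (2 * μ.re + a) = 0 := by
    have h := congrArg Complex.im hμ
    simp only [sq, add_im, mul_im, ofReal_re, ofReal_im, zero_im] at h
    linear_combination h
  rw [← sq_lt_one_iff₀ (norm_nonneg μ), Complex.sq_norm, Complex.normSq_apply]
  rcases mul_eq_zero.mp him with hreal | hvertex
  · have hx := abs_lt_one_of_sq_add_mul_add_eq_zero hb ha (by simpa [hreal] using hre)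
    simpa [hreal, ← sq, sq_lt_one_iff_abs_lt_one] using hx
  · have hnormSq : μ.re * μ.re + μ.im * μ.im = b := by
      linear_combination -hre + μ.re * hvertex
    linarith

theorem stmt_4_general (α β lam : ℝ) (hlam : 0 < lam) (hα : 0 < α)
    (hβ : β ∈ Set.Ioo (max (-1 + α * lam / 2) 0) 1) :
    ∀ μ : ℂ, μ ^ 2 - ((1 + β - α * lam : ℝ) : ℂ) * μ + ((β : ℝ) : ℂ) = 0 →
      ‖μ‖ < 1 := by
  intro μ hμ
  obtain ⟨hβ_lower, hβ_one⟩ := hβ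
  have hαlam : 0 < α * lam := mul_pos hα hlam
  have hβ_vertex : -1 + α * lam / 2 < β := (le_max_left _ _).trans_lt hβ_lower
  have ha : |-(1 + β - α * lam)| < 1 + β := abs_lt.mpr ⟨by linarith, by linarith⟩
  refine Complex.norm_lt_one_of_sq_add_mul_add_eq_zero hβ_one ha ?_
  push_cast at hμ ⊢
  linear_combination hμ

/-- Suppose `λ > 0`, `0 < α < 4/λ`, and `β ∈ (max(-1 + αλ/2, 0), 1)`.
Then every complex root `μ` of the quadratic `t(μ) = μ² - (1 + β - αλ)μ + β`
satisfies `|μ| < 1`. -/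
theorem stmt_4 (α β lam : ℝ) (hlam : 0 < lam) (hα : 0 < α) (hα' : α < 4 / lam)
    (hβ : β ∈ Set.Ioo (max (-1 + α * lam / 2) 0) 1) :
    ∀ μ : ℂ, μ ^ 2 - ((1 + β - α * lam : ℝ) : ℂ) * μ + ((β : ℝ) : ℂ) = 0 →
      ‖μ‖ < 1 :=
  stmt_4_general α β lam hlam hα hβ
end

section
/- Let H be an n×n real symmetric matrix whose eigenvalues, counted with multiplicity and listed in decreasing order λ₁ ≥ λ₂ ≥ ⋯ ≥ λₙ, satisfy λ₁ > 0 and λ_{n-p+1}, …, λₙ < 0 ≤ λ_{n-p} for some p with 1 ≤ p < n (i.e. H has exactly p negative eigenvalues). Suppose 0 < α < 4/λ₁ and β ∈ (max(-1 + αλ₁/2, 0), 1). Then exactly p of the 2n complex roots (counted with multiplicity) of the characteristic polynomial of the 2n×2n block matrix A = [[(1+β)Iₙ - αH, -βIₙ], [Iₙ, 0]] have modulus greater than 1; each such root is real and lies in (1, ∞), and the remaining 2n - p roots have modulus at most 1. -/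
open Polynomial Matrix

/-!
The lower blocks of `r - A` commute, so `det (r - A) = det ((r² - (1 + β) r + β) + α r H)`, and
the characteristic polynomial of `A` splits into the quadratics `X² - (1 + β - α λᵢ) X + β`, one
per eigenvalue of `H`. Each has root product `β ∈ (0, 1)`. Non-real roots have modulus `√β < 1`,
and a real root `x` with `|1 + β - α λᵢ| ≤ 1 + β` satisfies `|x| ≤ 1` because `(x - 1)(x - β) > 0`
for `x > 1`. The bound `β > α λ₁ / 2 - 1` gives `1 + β - α λᵢ ≥ -(1 + β)` for all `i`, so only
the quadratics with `λᵢ < 0` can leave the unit disc; their roots are real, with product `β < 1`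
and `(1 - x)(1 - y) = α λᵢ < 0`, so exactly one of them lies in `(1, ∞)`.
-/

namespace Matrix

variable {ι : Type*} [Fintype ι] [DecidableEq ι]

theorem charpoly_fromBlocks_eq_det {R : Type*} [CommRing R] (M : Matrix ι ι R) (c : R) :
    (fromBlocks M (-(c • 1 : Matrix ι ι R)) 1 0).charpoly =
      ((X ^ 2 + C c) • 1 - (X : R[X]) • M.map C).det := by
  have hcharmatrix : charmatrix (fromBlocks M (-(c • 1 : Matrix ι ι R)) 1 0) =
      fromBlocks (scalar ι X - M.map C) (C c • 1) (-1) (scalar ι X) := by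
    ext (i | i) (j | j) <;> by_cases h : i = j <;> simp [h]
  have htriangular : charmatrix (fromBlocks M (-(c • 1 : Matrix ι ι R)) 1 0) *
      fromBlocks (scalar ι X) 0 1 1 =
      fromBlocks ((X ^ 2 + C c) • 1 - (X : R[X]) • M.map C) (C c • 1) 0 (scalar ι X) := by
    rw [hcharmatrix, fromBlocks_multiply, fromBlocks_inj]
    refine ⟨?_, by simp, by simp, by simp⟩
    simp only [scalar_apply, ← smul_one_eq_diagonal, Algebra.mul_smul_comm, mul_one]
    module
  have h := congrArg det htriangular
  rw [det_mul, det_fromBlocks_zero₁₂, det_fromBlocks_zero₂₁, det_one, mul_one, scalar_apply,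
    det_diagonal, Finset.prod_const] at h
  exact (isRegular_X_pow _).right h

theorem det_smul_one_sub_smul_eq_prod {K : Type*} [Field K] {M : Matrix ι ι K} {μ : ι → K}
    (hM : M.charpoly = ∏ i, (X - C (μ i))) (s t : K) :
    (s • (1 : Matrix ι ι K) - t • M).det = ∏ i, (s - t * μ i) := by
  rcases eq_or_ne t 0 with rfl | ht
  · simp
  · have hscale : s • (1 : Matrix ι ι K) - t • M = t • ((s / t) • (1 : Matrix ι ι K) - M) := by
      rw [smul_sub, smul_smul, mul_div_cancel₀ _ ht]
    have hchar := congrArg (eval (s / t)) hM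
    rw [eval_charpoly, eval_prod, scalar_apply, ← smul_one_eq_diagonal] at hchar
    rw [hscale, det_smul, hchar, Fintype.card, ← Finset.prod_const, ← Finset.prod_mul_distrib]
    simp only [eval_sub, eval_X, eval_C, mul_sub, mul_div_cancel₀ _ ht]

variable {K : Type*} [Field K] [Infinite K]

theorem charpoly_smul_one_sub_smul_eq_prod {M : Matrix ι ι K} {μ : ι → K}
    (hM : M.charpoly = ∏ i, (X - C (μ i))) (a b : K) :
    (a • 1 - b • M).charpoly = ∏ i, (X - C (a - b * μ i)) := by
  refine Polynomial.funext fun r => ?_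
  have hshift : scalar ι r - (a • 1 - b • M) = (r - a) • 1 - (-b) • M := by
    rw [scalar_apply, ← smul_one_eq_diagonal]; module
  rw [eval_charpoly, hshift, det_smul_one_sub_smul_eq_prod hM, eval_prod]
  simp only [eval_sub, eval_X, eval_C]
  congr! 1; ring

theorem charpoly_fromBlocks_eq_prod {M : Matrix ι ι K} {μ : ι → K}
    (hM : M.charpoly = ∏ i, (X - C (μ i))) (c : K) :
    (fromBlocks M (-(c • 1 : Matrix ι ι K)) 1 0).charpoly =
      ∏ i, (X ^ 2 - C (μ i) * X + C c) := by
  refine Polynomial.funext fun r => ?_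
  have heval : (evalRingHom r).mapMatrix ((X ^ 2 + C c) • 1 - (X : K[X]) • M.map C) =
      (r ^ 2 + c) • 1 - r • M := by
    ext i j; by_cases h : i = j <;> simp [h, mul_comm r]
  rw [charpoly_fromBlocks_eq_det, ← coe_evalRingHom, RingHom.map_det, heval,
    det_smul_one_sub_smul_eq_prod hM, map_prod]
  simp only [coe_evalRingHom, eval_add, eval_sub, eval_mul, eval_pow, eval_X, eval_C]
  congr! 1; ring

end Matrix

section QuadraticRoots

theorem le_one_of_sq_sub_mul_add_eq_zero {x b c : ℝ} (hc : c ≤ 1) (hb : b ≤ 1 + c)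
    (h : x ^ 2 - b * x + c = 0) : x ≤ 1 := by
  by_contra! hx
  nlinarith [mul_pos (sub_pos.2 hx) (sub_pos.2 (hc.trans_lt hx))]

theorem neg_one_le_of_sq_sub_mul_add_eq_zero {x b c : ℝ} (hc : c ≤ 1) (hb : -(1 + c) ≤ b)
    (h : x ^ 2 - b * x + c = 0) : -1 ≤ x :=
  neg_le.1 <| le_one_of_sq_sub_mul_add_eq_zero (b := -b) hc (by linarith) (by linear_combination h)

variable {b c : ℝ} {z : ℂ}

theorem re_sq_sub_mul_add_eq_zero_of_im_eq_zero (hz : z ^ 2 - b * z + c = 0) (him : z.im = 0) :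
    z.re ^ 2 - b * z.re + c = 0 := by
  simpa [pow_two, him] using congrArg Complex.re hz

theorem two_mul_re_eq_and_normSq_eq_of_quadratic_root (hz : z ^ 2 - b * z + c = 0)
    (him : z.im ≠ 0) : 2 * z.re = b ∧ Complex.normSq z = c := by
  have hre := congrArg Complex.re hz
  have him' := congrArg Complex.im hz
  simp only [pow_two, Complex.sub_re, Complex.add_re, Complex.mul_re, Complex.ofReal_re,
    Complex.ofReal_im, Complex.sub_im, Complex.add_im, Complex.mul_im, Complex.zero_re,
    Complex.zero_im] at hre him'
  have hb : 2 * z.re = b := mul_left_cancel₀ him (by linear_combination him')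
  exact ⟨hb, by rw [Complex.normSq_apply]; linear_combination -hre + z.re * hb⟩

theorem im_eq_zero_of_quadratic_root (hdisc : 4 * c ≤ b ^ 2) (hz : z ^ 2 - b * z + c = 0) :
    z.im = 0 := by
  by_contra him
  obtain ⟨hre, hnormSq⟩ := two_mul_re_eq_and_normSq_eq_of_quadratic_root hz him
  rw [Complex.normSq_apply] at hnormSq
  rw [← hre, ← hnormSq] at hdisc
  nlinarith [mul_self_pos.2 him]

theorem norm_le_one_of_quadratic_root_of_im_ne_zero (hc : c ≤ 1) (hz : z ^ 2 - b * z + c = 0)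
    (him : z.im ≠ 0) : ‖z‖ ≤ 1 := by
  rw [← sq_le_one_iff₀ (norm_nonneg z), Complex.sq_norm,
    (two_mul_re_eq_and_normSq_eq_of_quadratic_root hz him).2]
  exact hc

theorem norm_le_one_of_quadratic_root (hc : c ≤ 1) (hb : |b| ≤ 1 + c)
    (hz : z ^ 2 - b * z + c = 0) : ‖z‖ ≤ 1 := by
  by_cases him : z.im = 0
  · have hx := re_sq_sub_mul_add_eq_zero_of_im_eq_zero hz him
    rw [← Complex.abs_re_eq_norm.2 him, abs_le]
    exact ⟨neg_one_le_of_sq_sub_mul_add_eq_zero hc (neg_le_of_abs_le hb) hx,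
      le_one_of_sq_sub_mul_add_eq_zero hc (le_of_abs_le hb) hx⟩
  · exact norm_le_one_of_quadratic_root_of_im_ne_zero hc hz him

theorem im_eq_zero_and_one_lt_re_of_quadratic_root (hc : c ≤ 1) (hb : -(1 + c) ≤ b)
    (hz : z ^ 2 - b * z + c = 0) (hz1 : 1 < ‖z‖) : z.im = 0 ∧ 1 < z.re := by
  have him : z.im = 0 := by
    by_contra him
    exact hz1.not_ge (norm_le_one_of_quadratic_root_of_im_ne_zero hc hz him)
  rw [← Complex.abs_re_eq_norm.2 him, lt_abs] at hz1
  have hre := neg_one_le_of_sq_sub_mul_add_eq_zero hc hb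
    (re_sq_sub_mul_add_eq_zero_of_im_eq_zero hz him)
  exact ⟨him, hz1.resolve_right (by linarith)⟩

end QuadraticRoots

theorem sq_sub_mul_add_eq_zero_of_mem_roots {R : Type*} [CommRing R] [IsDomain R] {b c μ : R}
    (h : μ ∈ (X ^ 2 - C b * X + C c).roots) : μ ^ 2 - b * μ + c = 0 := by
  simpa using isRoot_of_mem_roots h

theorem exists_roots_quadratic_eq_pair (b c : ℂ) :
    ∃ z w : ℂ, (X ^ 2 - C b * X + C c).roots = {z, w} ∧ z + w = b ∧ z * w = c := by
  have hquadratic : X ^ 2 - C b * X + C c = C 1 * X ^ 2 + C (-b) * X + C c := by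
    simp only [C_1, one_mul, C_neg]; ring
  obtain ⟨z, hz⟩ := Complex.exists_root (f := X ^ 2 - C b * X + C c)
    (by rw [hquadratic, degree_quadratic one_ne_zero]; norm_num)
  have hz : z ^ 2 - b * z + c = 0 := by simpa using hz
  refine ⟨z, b - z, ?_, by ring, by linear_combination -hz⟩
  rw [hquadratic, roots_quadratic_eq_pair_iff_of_ne_zero one_ne_zero]
  exact ⟨by ring, by linear_combination hz⟩

theorem monic_X_sq_sub_C_mul_X_add_C {R : Type*} [CommRing R] [Nontrivial R] (b c : R) :
    (X ^ 2 - C b * X + C c).Monic := by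
  monicity!

theorem card_filter_one_lt_norm_roots_quadratic {b c : ℝ} (hc0 : 0 < c) (hc1 : c < 1)
    (hb : -(1 + c) ≤ b) :
    ((X ^ 2 - C (b : ℂ) * X + C (c : ℂ)).roots.filter (fun μ => 1 < ‖μ‖)).card =
      if 1 + c < b then 1 else 0 := by
  obtain ⟨z, w, hroots, hsum, hprod⟩ := exists_roots_quadratic_eq_pair (b : ℂ) c
  have hz : z ^ 2 - b * z + c = 0 := by rw [← hsum, ← hprod]; ring
  have hw : w ^ 2 - b * w + c = 0 := by rw [← hsum, ← hprod]; ring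
  split_ifs with hbc
  · have hdisc : 4 * c ≤ b ^ 2 := by nlinarith
    have hzim := im_eq_zero_of_quadratic_root hdisc hz
    have hwim := im_eq_zero_of_quadratic_root hdisc hw
    have not_both : ¬(1 < ‖z‖ ∧ 1 < ‖w‖) := by
      rintro ⟨hz1, hw1⟩
      have : ‖z * w‖ = c := by rw [hprod, Complex.norm_real, Real.norm_of_nonneg hc0.le]
      rw [Complex.norm_mul] at this
      nlinarith
    have one_of : 1 < ‖z‖ ∨ 1 < ‖w‖ := by
      by_contra! hle
      have hre_sum := congrArg Complex.re hsum
      have hre_prod := congrArg Complex.re hprod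
      simp only [Complex.add_re, Complex.mul_re, hzim, hwim, Complex.ofReal_re, mul_zero,
        sub_zero] at hre_sum hre_prod
      nlinarith [(Complex.re_le_norm z).trans hle.1, (Complex.re_le_norm w).trans hle.2]
    rw [hroots, Multiset.insert_eq_cons, Multiset.filter_cons, Multiset.filter_singleton]
    by_cases hz1 : 1 < ‖z‖ <;> by_cases hw1 : 1 < ‖w‖ <;> simp_all
  · rw [Multiset.card_eq_zero, Multiset.filter_eq_nil]
    intro μ hμ
    refine not_lt.2 (norm_le_one_of_quadratic_root hc1.le (abs_le.2 ⟨hb, not_lt.1 hbc⟩) ?_)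
    simpa using sq_sub_mul_add_eq_zero_of_mem_roots hμ

theorem card_filter_neg_eq {n p : ℕ} (hpn : p ≤ n) {lam : Fin n → ℝ}
    (hsign : ∀ i : Fin n, ((i : ℕ) < n - p → 0 ≤ lam i) ∧ (n - p ≤ (i : ℕ) → lam i < 0)) :
    (Finset.univ.filter fun i => lam i < 0).card = p := by
  have hneg : (Finset.univ.filter fun i => lam i < 0) =
      Finset.univ.filter fun i : Fin n => ¬(i : ℕ) < n - p := by
    ext i
    simp only [Finset.mem_filter, Finset.mem_univ, true_and, not_lt]
    exact ⟨fun h => not_lt.1 fun hi => ((hsign i).1 hi).not_gt h, (hsign i).2⟩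
  rw [hneg, Finset.filter_not, Finset.card_sdiff, Finset.inter_univ, Fin.card_filter_val_lt,
    Finset.card_univ, Fintype.card_fin]
  omega

theorem stmt_5_general (n p : ℕ) (hn : 0 < n) (hpn : p < n)
    (H : Matrix (Fin n) (Fin n) ℝ)
    (lam : Fin n → ℝ) (hdec : ∀ i j : Fin n, i ≤ j → lam j ≤ lam i)
    (heig : H.charpoly = ∏ i : Fin n, (X - C (lam i)))
    (hsign : ∀ i : Fin n, ((i : ℕ) < n - p → 0 ≤ lam i) ∧ (n - p ≤ (i : ℕ) → lam i < 0))
    (α β : ℝ) (hα : 0 < α)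
    (hβ : β ∈ Set.Ioo (max (-1 + α * lam ⟨0, hn⟩ / 2) 0) 1)
    (A : Matrix (Fin n ⊕ Fin n) (Fin n ⊕ Fin n) ℝ)
    (hA : A = Matrix.fromBlocks ((1 + β) • (1 : Matrix (Fin n) (Fin n) ℝ) - α • H)
      (-(β • (1 : Matrix (Fin n) (Fin n) ℝ))) (1 : Matrix (Fin n) (Fin n) ℝ) 0) :
    Multiset.card
        (((A.map (algebraMap ℝ ℂ)).charpoly.roots).filter (fun μ => 1 < ‖μ‖)) = p ∧
    (∀ μ ∈ (A.map (algebraMap ℝ ℂ)).charpoly.roots,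
        1 < ‖μ‖ → μ.im = 0 ∧ 1 < μ.re) ∧
    Multiset.card ((A.map (algebraMap ℝ ℂ)).charpoly.roots) = 2 * n := by
  obtain ⟨hβlo, hβ1⟩ := hβ
  have hβ0 : 0 < β := (le_max_right _ _).trans_lt hβlo
  have hb : ∀ i, -(1 + β) ≤ 1 + β - α * lam i := fun i => by
    have := mul_le_mul_of_nonneg_left (hdec ⟨0, hn⟩ i (Nat.zero_le _)) hα.le
    linarith [(le_max_left _ _).trans_lt hβlo]
  have hroots : (A.map (algebraMap ℝ ℂ)).charpoly.roots = Finset.univ.val.bind fun i =>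
      (X ^ 2 - C ((1 + β - α * lam i : ℝ) : ℂ) * X + C (β : ℂ)).roots := by
    have hmonic := monic_prod_of_monic Finset.univ _ fun i _ =>
      monic_X_sq_sub_C_mul_X_add_C ((1 + β - α * lam i : ℝ) : ℂ) (β : ℂ)
    rw [← roots_prod _ _ hmonic.ne_zero, charpoly_map, hA,
      charpoly_fromBlocks_eq_prod (charpoly_smul_one_sub_smul_eq_prod heig _ _), Polynomial.map_prod]
    simp
  refine ⟨?_, fun μ hμ hμ1 => ?_, ?_⟩
  · rw [hroots, Multiset.filter_bind, Multiset.card_bind]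
    simp_rw [Function.comp_def, card_filter_one_lt_norm_roots_quadratic hβ0 hβ1 (hb _)]
    rw [← Finset.sum_eq_multiset_sum, Finset.sum_boole, ← card_filter_neg_eq hpn.le hsign]
    norm_cast
    congr 1
    refine Finset.filter_congr fun i _ => ?_
    rw [lt_sub_iff_add_lt, add_lt_iff_neg_left]
    exact ⟨fun h => neg_of_mul_neg_right h hα.le, mul_neg_of_pos_of_neg hα⟩
  · obtain ⟨i, -, hμi⟩ := Multiset.mem_bind.1 (hroots ▸ hμ)
    exact im_eq_zero_and_one_lt_re_of_quadratic_root hβ1.le (hb i)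
      (by simpa using sq_sub_mul_add_eq_zero_of_mem_roots hμi) hμ1
  · rw [IsAlgClosed.card_roots_eq_natDegree, charpoly_natDegree_eq_dim]
    simp [two_mul]

/-- Let `H` be an `n×n` real symmetric matrix whose eigenvalues, counted
with multiplicity and listed in decreasing order `λ₁ ≥ ⋯ ≥ λₙ`, satisfy `λ₁ > 0` and
`λ_{n-p+1}, …, λₙ < 0 ≤ λ_{n-p}` for some `1 ≤ p < n`. Suppose `0 < α < 4/λ₁` and
`β ∈ (max(-1 + αλ₁/2, 0), 1)`. Then exactly `p` of the `2n` complex roots (with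
multiplicity) of the characteristic polynomial of
`A = [[(1+β)Iₙ - αH, -βIₙ], [Iₙ, 0]]` have modulus greater than `1`; each such root is
real and lies in `(1, ∞)`, and the remaining `2n - p` roots have modulus at most `1`. -/
theorem stmt_5 (n p : ℕ) (hn : 0 < n) (hp : 1 ≤ p) (hpn : p < n)
    (H : Matrix (Fin n) (Fin n) ℝ) (hH : H.IsSymm)
    (lam : Fin n → ℝ) (hdec : ∀ i j : Fin n, i ≤ j → lam j ≤ lam i)
    (heig : H.charpoly = ∏ i : Fin n, (X - C (lam i)))
    (hpos : 0 < lam ⟨0, hn⟩)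
    (hsign : ∀ i : Fin n, ((i : ℕ) < n - p → 0 ≤ lam i) ∧ (n - p ≤ (i : ℕ) → lam i < 0))
    (α β : ℝ) (hα : 0 < α) (hα' : α < 4 / lam ⟨0, hn⟩)
    (hβ : β ∈ Set.Ioo (max (-1 + α * lam ⟨0, hn⟩ / 2) 0) 1)
    (A : Matrix (Fin n ⊕ Fin n) (Fin n ⊕ Fin n) ℝ)
    (hA : A = Matrix.fromBlocks ((1 + β) • (1 : Matrix (Fin n) (Fin n) ℝ) - α • H)
      (-(β • (1 : Matrix (Fin n) (Fin n) ℝ))) (1 : Matrix (Fin n) (Fin n) ℝ) 0) :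
    Multiset.card
        (((A.map (algebraMap ℝ ℂ)).charpoly.roots).filter (fun μ => 1 < ‖μ‖)) = p ∧
    (∀ μ ∈ (A.map (algebraMap ℝ ℂ)).charpoly.roots,
        1 < ‖μ‖ → μ.im = 0 ∧ 1 < μ.re) ∧
    Multiset.card ((A.map (algebraMap ℝ ℂ)).charpoly.roots) = 2 * n :=
  stmt_5_general n p hn hpn H lam hdec heig hsign α β hα hβ A hA
end

section
/- Let H be an n×n real symmetric matrix, let v ∈ ℝⁿ be an eigenvector of H with Hv = λv for some λ < 0, and suppose μ ∈ ℝ satisfies μ ≠ 0 and μ² - (1 + β - αλ)μ + β = 0. Then the vector (v, (1/μ)v) ∈ ℝ²ⁿ is an eigenvector of the block matrix A = [[(1+β)Iₙ - αH, -βIₙ], [Iₙ, 0]] with eigenvalue μ, i.e. A(v, (1/μ)v) = μ·(v, (1/μ)v). -/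
/-! The top block row of `A (v, μ⁻¹ v) = μ (v, μ⁻¹ v)` reads `(1 + β - α λ) v - β μ⁻¹ v = μ v`,
which after multiplying by `μ` is exactly the quadratic `μ² - (1 + β - α λ) μ + β = 0`;
the bottom block row `v = μ (μ⁻¹ v)` holds for every `μ ≠ 0`. -/

namespace Matrix

variable {K ι : Type*} [Field K] [Fintype ι] [DecidableEq ι]

/-- The iteration matrix of the heavy-ball method with step size `α` and momentum `β`
on a quadratic with Hessian `H`. -/
def heavyBallMatrix (α β : K) (H : Matrix ι ι K) : Matrix (ι ⊕ ι) (ι ⊕ ι) K :=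
  fromBlocks ((1 + β) • (1 : Matrix ι ι K) - α • H) (-(β • (1 : Matrix ι ι K))) 1 0

theorem heavyBallMatrix_mulVec_sumElim (α β : K) (H : Matrix ι ι K) (x y : ι → K) :
    heavyBallMatrix α β H *ᵥ Sum.elim x y = Sum.elim ((1 + β) • x - α • H *ᵥ x - β • y) x := by
  simp only [heavyBallMatrix, fromBlocks_mulVec, Sum.elim_comp_inl, Sum.elim_comp_inr,
    sub_mulVec, smul_mulVec, one_mulVec, neg_mulVec, zero_mulVec, add_zero, ← sub_eq_add_neg]

theorem heavyBallMatrix_mulVec_eigenvector {α β lam μ : K} {H : Matrix ι ι K} {v : ι → K}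
    (heig : H *ᵥ v = lam • v) (hμ : μ ≠ 0) (hroot : μ ^ 2 - (1 + β - α * lam) * μ + β = 0) :
    heavyBallMatrix α β H *ᵥ Sum.elim v (μ⁻¹ • v) = μ • Sum.elim v (μ⁻¹ • v) := by
  have htop : 1 + β - α * lam - β * μ⁻¹ = μ := by
    field_simp
    linear_combination -hroot
  rw [heavyBallMatrix_mulVec_sumElim, heig]
  ext (i | i)
  · simp only [Sum.elim_inl, Pi.smul_apply, Pi.sub_apply, smul_eq_mul]
    linear_combination v i * htop
  · simp only [Sum.elim_inr, Pi.smul_apply, smul_eq_mul, mul_inv_cancel_left₀ hμ]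

end Matrix

theorem stmt_6_general (n : ℕ) (H : Matrix (Fin n) (Fin n) ℝ)
    (α β lam : ℝ)
    (v : Fin n → ℝ) (hv : v ≠ 0) (heig : H.mulVec v = lam • v)
    (μ : ℝ) (hμ : μ ≠ 0) (hroot : μ ^ 2 - (1 + β - α * lam) * μ + β = 0)
    (A : Matrix (Fin n ⊕ Fin n) (Fin n ⊕ Fin n) ℝ)
    (hA : A = Matrix.fromBlocks ((1 + β) • (1 : Matrix (Fin n) (Fin n) ℝ) - α • H)
      (-(β • (1 : Matrix (Fin n) (Fin n) ℝ))) (1 : Matrix (Fin n) (Fin n) ℝ) 0) :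
    A.mulVec (Sum.elim v (μ⁻¹ • v)) = μ • Sum.elim v (μ⁻¹ • v) ∧
      Sum.elim v (μ⁻¹ • v) ≠ 0 := by
  subst hA
  refine ⟨Matrix.heavyBallMatrix_mulVec_eigenvector heig hμ hroot, fun h => hv ?_⟩
  exact (Sum.elim_eq_iff.1 (h.trans Sum.elim_zero_zero.symm)).1

/-- Let `H` be an `n×n` real symmetric matrix, `v` an eigenvector of `H`
with `Hv = λv` for some `λ < 0`, and suppose `μ ≠ 0` satisfies
`μ² - (1 + β - αλ)μ + β = 0`. Then `(v, (1/μ)v)` is an eigenvector of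
`A = [[(1+β)Iₙ - αH, -βIₙ], [Iₙ, 0]]` with eigenvalue `μ`. -/
theorem stmt_6 (n : ℕ) (H : Matrix (Fin n) (Fin n) ℝ) (hH : H.IsSymm)
    (α β lam : ℝ) (hlam : lam < 0)
    (v : Fin n → ℝ) (hv : v ≠ 0) (heig : H.mulVec v = lam • v)
    (μ : ℝ) (hμ : μ ≠ 0) (hroot : μ ^ 2 - (1 + β - α * lam) * μ + β = 0)
    (A : Matrix (Fin n ⊕ Fin n) (Fin n ⊕ Fin n) ℝ)
    (hA : A = Matrix.fromBlocks ((1 + β) • (1 : Matrix (Fin n) (Fin n) ℝ) - α • H)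
      (-(β • (1 : Matrix (Fin n) (Fin n) ℝ))) (1 : Matrix (Fin n) (Fin n) ℝ) 0) :
    A.mulVec (Sum.elim v (μ⁻¹ • v)) = μ • Sum.elim v (μ⁻¹ • v) ∧
      Sum.elim v (μ⁻¹ • v) ≠ 0 :=
  stmt_6_general n H α β lam v hv heig μ hμ hroot A hA
end

section
/- Suppose λ < 0, α > 0, and β ∈ (0, 1), and let M be the 2×2 real matrix M = [[1 + β - αλ, -β], [1, 0]]. Then for every τ > 0, the sequence (σ_k, η_k) := M^k (τ, τ) satisfies σ_k → ∞ and η_k → ∞ as k → ∞. In particular, for any τ ≠ 0, ‖M^k (τ, τ)‖ → ∞. -/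
open Matrix Filter

/-- Suppose `λ < 0`, `α > 0`, and `β ∈ (0, 1)`, and let
`M = [[1 + β - αλ, -β], [1, 0]]`. Then for every `τ > 0` the sequence
`(σ_k, η_k) := M^k (τ, τ)` satisfies `σ_k → ∞` and `η_k → ∞`. In particular,
for any `τ ≠ 0`, `‖M^k (τ, τ)‖ → ∞`. -/
theorem stmt_7 (α β lam : ℝ) (hlam : lam < 0) (hα : 0 < α) (hβ : β ∈ Set.Ioo (0 : ℝ) 1)
    (M : Matrix (Fin 2) (Fin 2) ℝ) (hM : M = !![1 + β - α * lam, -β; 1, 0]) :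
    (∀ τ : ℝ, 0 < τ →
      Tendsto (fun k : ℕ => ((M ^ k).mulVec ![τ, τ]) 0) atTop atTop ∧
      Tendsto (fun k : ℕ => ((M ^ k).mulVec ![τ, τ]) 1) atTop atTop) ∧
    (∀ τ : ℝ, τ ≠ 0 →
      Tendsto (fun k : ℕ => ‖(M ^ k).mulVec ![τ, τ]‖) atTop atTop) := by
  obtain ⟨hβ0, hβ1⟩ := hβ
  have hc : 1 < 1 - α * lam := by nlinarith
  have hMv : ∀ w : Fin 2 → ℝ,
      M.mulVec w 0 = (1 + β - α * lam) * w 0 - β * w 1 ∧ M.mulVec w 1 = w 0 := by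
    intro w
    constructor <;> rw [hM] <;>
      simp [Matrix.mulVec, dotProduct, Fin.sum_univ_two] <;> ring
  have hrec : ∀ (v : Fin 2 → ℝ) (n : ℕ),
      (M ^ (n + 1)).mulVec v = M.mulVec ((M ^ n).mulVec v) := by
    intro v n
    rw [pow_succ', Matrix.mulVec_mulVec]
  have main : ∀ τ : ℝ, 0 < τ → ∀ k : ℕ,
      ((M ^ k).mulVec ![τ, τ]) 1 ≤ ((M ^ k).mulVec ![τ, τ]) 0 ∧
      τ ≤ ((M ^ k).mulVec ![τ, τ]) 1 ∧
      (1 - α * lam) ^ k * τ ≤ ((M ^ k).mulVec ![τ, τ]) 0 := by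
    intro τ hτ k
    induction k with
    | zero => simp [Matrix.mulVec, dotProduct, Fin.sum_univ_two]
    | succ n ih =>
      obtain ⟨h1, h2, h3⟩ := ih
      set σ := ((M ^ n).mulVec ![τ, τ]) 0
      set η := ((M ^ n).mulVec ![τ, τ]) 1
      have h0 : ((M ^ (n + 1)).mulVec ![τ, τ]) 0 = (1 + β - α * lam) * σ - β * η := by
        rw [hrec]; exact (hMv _).1
      have hη : ((M ^ (n + 1)).mulVec ![τ, τ]) 1 = σ := by
        rw [hrec]; exact (hMv _).2
      have hpow : (1 : ℝ) ≤ (1 - α * lam) ^ n := one_le_pow₀ hc.le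
      have hσpos : 0 < σ := lt_of_lt_of_le (by nlinarith) h3
      refine ⟨?_, ?_, ?_⟩
      · rw [h0, hη]; nlinarith
      · rw [hη]; nlinarith
      · rw [h0, pow_succ]; nlinarith
  have hσtend : ∀ τ : ℝ, 0 < τ →
      Tendsto (fun k : ℕ => ((M ^ k).mulVec ![τ, τ]) 0) atTop atTop := by
    intro τ hτ
    refine tendsto_atTop_mono (fun k => (main τ hτ k).2.2) ?_
    exact (tendsto_pow_atTop_atTop_of_one_lt hc).atTop_mul_const hτ
  have hηtend : ∀ τ : ℝ, 0 < τ →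
      Tendsto (fun k : ℕ => ((M ^ k).mulVec ![τ, τ]) 1) atTop atTop := by
    intro τ hτ
    rw [← tendsto_add_atTop_iff_nat 1]
    have : (fun k : ℕ => ((M ^ (k + 1)).mulVec ![τ, τ]) 1)
        = fun k : ℕ => ((M ^ k).mulVec ![τ, τ]) 0 := by
      funext n
      rw [hrec]; exact (hMv _).2
    rw [this]
    exact hσtend τ hτ
  refine ⟨fun τ hτ => ⟨hσtend τ hτ, hηtend τ hτ⟩, ?_⟩
  intro τ hτ
  have key : ∀ τ : ℝ, 0 < τ →
      Tendsto (fun k : ℕ => ‖(M ^ k).mulVec ![τ, τ]‖) atTop atTop := by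
    intro τ hτ
    refine tendsto_atTop_mono (fun k => ?_) (hσtend τ hτ)
    calc ((M ^ k).mulVec ![τ, τ]) 0 ≤ ‖((M ^ k).mulVec ![τ, τ]) 0‖ := by
          rw [Real.norm_eq_abs]; exact le_abs_self _
    _ ≤ ‖(M ^ k).mulVec ![τ, τ]‖ := norm_le_pi_norm ((M ^ k).mulVec ![τ, τ]) 0
  rcases hτ.lt_or_gt with h | h
  · have heq : ∀ k : ℕ, ‖(M ^ k).mulVec ![τ, τ]‖ = ‖(M ^ k).mulVec ![-τ, -τ]‖ := by
      intro k
      have hv : (![-τ, -τ] : Fin 2 → ℝ) = -![τ, τ] := by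
        funext i; fin_cases i <;> simp
      rw [hv, Matrix.mulVec_neg, norm_neg]
    simp only [heq]
    exact key (-τ) (by linarith)
  · exact key τ h
end

section
/- Let H be an n×n real symmetric matrix, α > 0, β ∈ (0, 1), and let A = [[(1+β)Iₙ - αH, -βIₙ], [Iₙ, 0]]. Suppose v ∈ ℝⁿ is a unit eigenvector of H with Hv = λv for some λ < 0. Then for every w ∈ ℝⁿ with ⟨v, w⟩ ≠ 0, the iterates satisfy ‖A^k (w, w)‖ → ∞ as k → ∞. Consequently, a vector of the form (w, w) can lie in an A-invariant subspace on which all iterates A^k(w,w) remain bounded only if w is orthogonal to every eigenvector of H corresponding to a negative eigenvalue. -/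
open Matrix Filter

/-- Auxiliary: a sequence satisfying `a (k+2) = (q+b) a (k+1) - b * a k` with
`a 1 = q * a 0`, `a 0 > 0`, `q > 1`, `b > 0` stays positive and grows by factor `q`. -/
lemma stmt8_seq_aux (q b : ℝ) (hq : 1 < q) (hb : 0 < b) (a : ℕ → ℝ)
    (h0 : 0 < a 0) (h1 : a 1 = q * a 0)
    (hrec : ∀ k, a (k + 2) = (q + b) * a (k + 1) - b * a k) :
    ∀ k, 0 < a k ∧ q * a k ≤ a (k + 1) := by
  intro k
  induction k with
  | zero => exact ⟨h0, le_of_eq h1.symm⟩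
  | succ k ih =>
    obtain ⟨hk, hk1⟩ := ih
    have h1' : 0 < a (k + 1) := lt_of_lt_of_le (by nlinarith) hk1
    refine ⟨h1', ?_⟩
    have hle : a k ≤ a (k + 1) := by nlinarith
    have := mul_le_mul_of_nonneg_left hle hb.le
    rw [hrec k]
    nlinarith
  
lemma stmt8_seq_ge (q b : ℝ) (hq : 1 < q) (hb : 0 < b) (a : ℕ → ℝ)
    (h0 : 0 < a 0) (h1 : a 1 = q * a 0)
    (hrec : ∀ k, a (k + 2) = (q + b) * a (k + 1) - b * a k) :
    ∀ k, q ^ k * a 0 ≤ a k := by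
  intro k
  induction k with
  | zero => simp
  | succ k ih =>
    have h := stmt8_seq_aux q b hq hb a h0 h1 hrec k
    have hq0 : (0:ℝ) < q := lt_trans one_pos hq
    calc q ^ (k + 1) * a 0 = q * (q ^ k * a 0) := by ring
    _ ≤ q * a k := by nlinarith
    _ ≤ a (k + 1) := h.2

/-- Let `H` be an `n×n` real symmetric matrix, `α > 0`, `β ∈ (0, 1)`, and
`A = [[(1+β)Iₙ - αH, -βIₙ], [Iₙ, 0]]`. If `v` is a unit eigenvector of `H` with
`Hv = λv`, `λ < 0`, then for every `w` with `⟨v, w⟩ ≠ 0` we have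
`‖A^k (w, w)‖ → ∞`. Consequently, `(w, w)` can have bounded iterates `A^k (w, w)`
only if `w` is orthogonal to every eigenvector of `H` with negative eigenvalue. -/
theorem stmt_8 (n : ℕ) (H : Matrix (Fin n) (Fin n) ℝ) (hH : H.IsSymm)
    (α β : ℝ) (hα : 0 < α) (hβ : β ∈ Set.Ioo (0 : ℝ) 1)
    (A : Matrix (Fin n ⊕ Fin n) (Fin n ⊕ Fin n) ℝ)
    (hA : A = Matrix.fromBlocks ((1 + β) • (1 : Matrix (Fin n) (Fin n) ℝ) - α • H)
      (-(β • (1 : Matrix (Fin n) (Fin n) ℝ))) (1 : Matrix (Fin n) (Fin n) ℝ) 0) :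
    (∀ (v w : Fin n → ℝ) (lam : ℝ), H.mulVec v = lam • v → lam < 0 → v ⬝ᵥ v = 1 →
      v ⬝ᵥ w ≠ 0 →
      Tendsto (fun k : ℕ => ‖(A ^ k).mulVec (Sum.elim w w)‖) atTop atTop) ∧
    (∀ w : Fin n → ℝ, (∃ C : ℝ, ∀ k : ℕ, ‖(A ^ k).mulVec (Sum.elim w w)‖ ≤ C) →
      ∀ (v : Fin n → ℝ) (lam : ℝ), v ≠ 0 → H.mulVec v = lam • v → lam < 0 →
        v ⬝ᵥ w = 0) := by
  obtain ⟨hβ0, hβ1⟩ := hβ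
  -- key claim with the extra hypothesis `0 < v ⬝ᵥ w`
  have key : ∀ (v w : Fin n → ℝ) (lam : ℝ), H.mulVec v = lam • v → lam < 0 →
      v ⬝ᵥ v = 1 → 0 < v ⬝ᵥ w →
      Tendsto (fun k : ℕ => ‖(A ^ k).mulVec (Sum.elim w w)‖) atTop atTop := by
    intro v w lam hev hlam hunit hc
    set x : ℕ → (Fin n ⊕ Fin n) → ℝ := fun k => (A ^ k).mulVec (Sum.elim w w) with hxdef
    have hx : ∀ k, x (k + 1) = A.mulVec (x k) := by
      intro k
      simp only [hxdef, pow_succ']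
      rw [← Matrix.mulVec_mulVec]
    set p : ℕ → Fin n → ℝ := fun k => x k ∘ Sum.inl with hpdef
    set q2 : ℕ → Fin n → ℝ := fun k => x k ∘ Sum.inr with hq2def
    have hstep : ∀ k, x (k + 1) = Sum.elim
        (((1 + β) • (1 : Matrix (Fin n) (Fin n) ℝ) - α • H) *ᵥ p k +
          (-(β • (1 : Matrix (Fin n) (Fin n) ℝ))) *ᵥ q2 k)
        ((1 : Matrix (Fin n) (Fin n) ℝ) *ᵥ p k +
          (0 : Matrix (Fin n) (Fin n) ℝ) *ᵥ q2 k) := by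
      intro k
      rw [hx, hA, Matrix.fromBlocks_mulVec]
    have hp : ∀ k, p (k + 1) = (1 + β) • p k - α • (H.mulVec (p k)) - β • q2 k := by
      intro k
      funext i
      have h0 : p (k + 1) i = x (k + 1) (Sum.inl i) := rfl
      rw [h0, hstep k, Sum.elim_inl]
      simp [Matrix.sub_mulVec, Matrix.add_mulVec, Matrix.neg_mulVec,
        Matrix.smul_mulVec, Matrix.one_mulVec, sub_eq_add_neg]
    have hq2 : ∀ k, q2 (k + 1) = p k := by
      intro k
      funext i
      have h0 : q2 (k + 1) i = x (k + 1) (Sum.inr i) := rfl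
      rw [h0, hstep k, Sum.elim_inr]
      simp [Matrix.one_mulVec]
    have hp0 : p 0 = w := by funext i; simp [hpdef, hxdef]
    have hq20 : q2 0 = w := by funext i; simp [hq2def, hxdef]
    set a : ℕ → ℝ := fun k => v ⬝ᵥ p k with hadef
    set bb : ℕ → ℝ := fun k => v ⬝ᵥ q2 k with hbbdef
    have hHdot : ∀ u : Fin n → ℝ, v ⬝ᵥ H.mulVec u = lam * (v ⬝ᵥ u) := by
      intro u
      rw [Matrix.dotProduct_mulVec]
      have hvH : v ᵥ* H = lam • v := by
        rw [← hH.eq, Matrix.vecMul_transpose, hev]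
      rw [hvH, smul_dotProduct, smul_eq_mul]
    have harec : ∀ k, a (k + 1) = (1 + β) * a k - α * (lam * a k) - β * bb k := by
      intro k
      simp only [hadef, hbbdef, hp k, dotProduct_sub, dotProduct_smul, smul_eq_mul,
        hHdot]
    have hbrec : ∀ k, bb (k + 1) = a k := by
      intro k; simp only [hbbdef, hadef, hq2 k]
    set q : ℝ := 1 - α * lam with hqdef
    have hq1 : 1 < q := by
      have : α * lam < 0 := mul_neg_of_pos_of_neg hα hlam
      simp only [hqdef]; linarith
    have ha0 : a 0 = v ⬝ᵥ w := by simp [hadef, hp0]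
    have hbb0 : bb 0 = v ⬝ᵥ w := by simp [hbbdef, hq20]
    have h0 : 0 < a 0 := by rw [ha0]; exact hc
    have h1 : a 1 = q * a 0 := by
      rw [harec 0, hbb0, ← ha0, hqdef]; ring
    have hrec : ∀ k, a (k + 2) = (q + β) * a (k + 1) - β * a k := by
      intro k
      rw [harec (k + 1), hbrec, hqdef]; ring
    have hge := stmt8_seq_ge q β hq1 hβ0 a h0 h1 hrec
    have hatend : Tendsto a atTop atTop := by
      refine tendsto_atTop_mono hge ?_
      exact (tendsto_pow_atTop_atTop_of_one_lt hq1).atTop_mul_const h0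
    -- bound `a k` by the norm of `x k`
    set S : ℝ := ∑ i, |v i| with hSdef
    have hS0 : 0 < S := by
      rcases lt_or_eq_of_le (Finset.sum_nonneg (fun i _ => abs_nonneg (v i)) :
          (0:ℝ) ≤ S) with h | h
      · exact h
      · exfalso
        have hv0 : v = 0 := by
          funext i
          have := (Finset.sum_eq_zero_iff_of_nonneg
            (fun i _ => abs_nonneg (v i))).1 h.symm i (Finset.mem_univ i)
          exact abs_eq_zero.1 this
        rw [hv0] at hunit
        simp at hunit
    have hbound : ∀ k, a k / S ≤ ‖x k‖ := by
      intro k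
      rw [div_le_iff₀ hS0]
      calc a k ≤ |a k| := le_abs_self _
      _ ≤ ∑ i, |v i * p k i| := by
          simp only [hadef, dotProduct]
          exact Finset.abs_sum_le_sum_abs _ _
      _ ≤ ∑ i, |v i| * ‖x k‖ := by
          refine Finset.sum_le_sum (fun i _ => ?_)
          rw [abs_mul]
          refine mul_le_mul_of_nonneg_left ?_ (abs_nonneg _)
          have := norm_le_pi_norm (x k) (Sum.inl i)
          simpa [hpdef, Real.norm_eq_abs] using this
      _ = ‖x k‖ * S := by rw [← Finset.sum_mul]; ring
    refine tendsto_atTop_mono hbound ?_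
    exact hatend.atTop_div_const hS0
  constructor
  · intro v w lam hev hlam hunit hc
    rcases hc.lt_or_gt with h | h
    · refine key (-v) w lam ?_ hlam ?_ ?_
      · rw [Matrix.mulVec_neg, hev, smul_neg]
      · simp [neg_dotProduct, dotProduct_neg, hunit]
      · simp only [neg_dotProduct]; linarith
    · exact key v w lam hev hlam hunit h
  · intro w ⟨C, hC⟩ v lam hv hev hlam
    by_contra hvw
    have hnn : (0:ℝ) ≤ v ⬝ᵥ v := by
      simp only [dotProduct]
      exact Finset.sum_nonneg fun i _ => mul_self_nonneg (v i)
    have hvv : 0 < v ⬝ᵥ v := by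
      rcases lt_or_eq_of_le hnn with h | h
      · exact h
      · exact absurd (dotProduct_self_eq_zero.1 h.symm) hv
    set s : ℝ := Real.sqrt (v ⬝ᵥ v) with hsdef
    have hs0 : 0 < s := Real.sqrt_pos.2 hvv
    set u : Fin n → ℝ := s⁻¹ • v with hudef
    have huu : u ⬝ᵥ u = 1 := by
      simp only [hudef, smul_dotProduct, dotProduct_smul, smul_eq_mul]
      rw [show s⁻¹ * (s⁻¹ * (v ⬝ᵥ v)) = (v ⬝ᵥ v) / (s * s) by field_simp]
      rw [hsdef, Real.mul_self_sqrt hvv.le]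
      exact div_self hvv.ne'
    have huev : H.mulVec u = lam • u := by
      simp only [hudef, Matrix.mulVec_smul, hev, smul_comm lam]
    have huw : u ⬝ᵥ w ≠ 0 := by
      simp only [hudef, smul_dotProduct, smul_eq_mul]
      exact mul_ne_zero (inv_ne_zero hs0.ne') hvw
    have htend : Tendsto (fun k : ℕ => ‖(A ^ k).mulVec (Sum.elim w w)‖) atTop atTop := by
      rcases huw.lt_or_gt with h | h
      · refine key (-u) w lam ?_ hlam ?_ ?_
        · rw [Matrix.mulVec_neg, huev, smul_neg]
        · simp [neg_dotProduct, dotProduct_neg, huu]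
        · simp only [neg_dotProduct]; linarith
      · exact key u w lam huev hlam huu h
    obtain ⟨k, hk⟩ := (htend.eventually_gt_atTop C).exists
    exact absurd (hC k) (not_le.2 hk)
end

section
/- Let 0 < δ < 1/3 and ε > 0, and define the real sequence (z_k)_{k≥-1} by z_{-1} = z_0 = ε and z_{k+1} = (1 + 3δ) z_k + (1 - 3δ)(z_k - z_{k-1}) for k ≥ 0. Then for all k ≥ 0, z_k ≥ (ε/2)(1 + √(3δ))^{k+1}. -/
/-- Let `0 < δ < 1/3` and `ε > 0`, and define `(z_k)_{k ≥ -1}` by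
`z_{-1} = z_0 = ε` and `z_{k+1} = (1 + 3δ) z_k + (1 - 3δ)(z_k - z_{k-1})` for `k ≥ 0`.
Then for all `k ≥ 0`, `z_k ≥ (ε/2)(1 + √(3δ))^{k+1}`.
(Here `z (m)` denotes `z_{m-1}`, so `z 0 = z_{-1}`, `z 1 = z_0`, etc.) -/
theorem stmt_9 (δ ε : ℝ) (hδ : 0 < δ) (hδ' : δ < 1 / 3) (hε : 0 < ε)
    (z : ℕ → ℝ) (hm1 : z 0 = ε) (h0 : z 1 = ε)
    (hrec : ∀ k : ℕ, z (k + 2) = (1 + 3 * δ) * z (k + 1) + (1 - 3 * δ) * (z (k + 1) - z k)) :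
    ∀ k : ℕ, ε / 2 * (1 + Real.sqrt (3 * δ)) ^ (k + 1) ≤ z (k + 1) := by
  set r := Real.sqrt (3 * δ) with hrdef
  have h3δ : (0:ℝ) ≤ 3 * δ := by linarith
  have hr2 : r ^ 2 = 3 * δ := Real.sq_sqrt h3δ
  have hr0 : 0 < r := Real.sqrt_pos.mpr (by linarith)
  have hr1 : r < 1 := by
    rw [hrdef]
    rw [show (1:ℝ) = Real.sqrt 1 from (Real.sqrt_one).symm]
    exact Real.sqrt_lt_sqrt h3δ (by linarith)
  -- closed form for increments
  have key : ∀ k : ℕ, z (k + 1) = (1 - r) * z k + r * ε * (1 + r) ^ k := by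
    intro k
    induction k with
    | zero => simp [hm1, h0]; ring
    | succ n ih =>
      have h := hrec n
      rw [← hr2] at h
      rw [h, ih]
      ring
  intro k
  induction k with
  | zero =>
    rw [h0]
    nlinarith
  | succ n ih =>
    have h := key (n + 1)
    rw [h, pow_succ]
    have hle : ε / 2 * (1 + r) ^ (n + 1) ≤ z (n + 1) := ih
    have hpow : (0:ℝ) < (1 + r) ^ (n + 1) := pow_pos (by linarith) _
    nlinarith [mul_le_mul_of_nonneg_left hle (by linarith : (0:ℝ) ≤ 1 - r)]
end

section
/- Fix α > 0 and λ > 0, and sequences (β_k)_{k≥1}, (γ_k)_{k≥1} with β_k, γ_k ∈ [0, 1]. Let (x_k)_{k≥0} be defined by x_1 = x_0 and x_{k+1} = ((1 + β_k) + (1 + γ_k)αλ) x_k − (β_k + γ_k αλ) x_{k-1} for k ≥ 1, and let (b_k)_{k≥0} be defined by b_0 = 0 and b_k = (β_k + γ_k αλ)(1 − 1/(1 + b_{k-1})) + αλ for k ≥ 1. Then for all k ≥ 0, x_{k+1} = x_0 · ∏_{m=0}^{k} (1 + b_m). -/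
/-- Fix `α > 0`, `λ > 0`, and sequences `β_k, γ_k ∈ [0,1]` for `k ≥ 1`.
Let `x_1 = x_0`, `x_{k+1} = ((1+β_k) + (1+γ_k)αλ) x_k − (β_k + γ_k αλ) x_{k-1}` for
`k ≥ 1`, and let `b_0 = 0`, `b_k = (β_k + γ_k αλ)(1 − 1/(1+b_{k-1})) + αλ` for `k ≥ 1`.
Then for all `k ≥ 0`, `x_{k+1} = x_0 ∏_{m=0}^{k} (1 + b_m)`. -/
theorem stmt_10 (α lam : ℝ) (hα : 0 < α) (hlam : 0 < lam)
    (β γ : ℕ → ℝ)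
    (hβ : ∀ k, 1 ≤ k → β k ∈ Set.Icc (0 : ℝ) 1)
    (hγ : ∀ k, 1 ≤ k → γ k ∈ Set.Icc (0 : ℝ) 1)
    (x b : ℕ → ℝ) (hx1 : x 1 = x 0)
    (hxrec : ∀ k, 1 ≤ k →
      x (k + 1) = ((1 + β k) + (1 + γ k) * α * lam) * x k
        - (β k + γ k * α * lam) * x (k - 1))
    (hb0 : b 0 = 0)
    (hbrec : ∀ k, 1 ≤ k →
      b k = (β k + γ k * α * lam) * (1 - 1 / (1 + b (k - 1))) + α * lam) :
    ∀ k : ℕ, x (k + 1) = x 0 * ∏ m ∈ Finset.range (k + 1), (1 + b m) := by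
  have hbnn : ∀ k, 0 ≤ b k := by
    intro k
    induction k with
    | zero => simp [hb0]
    | succ n ih =>
      rw [hbrec (n + 1) (by omega)]
      simp only [Nat.add_sub_cancel]
      have h1 : (0 : ℝ) < 1 + b n := by linarith
      have h2 : 1 / (1 + b n) ≤ 1 := by rw [div_le_one h1]; linarith
      have hβ' := hβ (n + 1) (by omega)
      have hγ' := hγ (n + 1) (by omega)
      have h3 : 0 ≤ β (n + 1) + γ (n + 1) * α * lam := by
        have := mul_nonneg (mul_nonneg hγ'.1 hα.le) hlam.le
        linarith [hβ'.1]
      nlinarith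
  have hstep : ∀ k, x (k + 1) = (1 + b k) * x k := by
    intro k
    induction k with
    | zero => simp [hb0, hx1]
    | succ n ih =>
      have hpos : (0 : ℝ) < 1 + b n := by have := hbnn n; linarith
      rw [hxrec (n + 1) (by omega), hbrec (n + 1) (by omega)]
      simp only [Nat.add_sub_cancel]
      rw [ih]
      field_simp
      ring
  intro k
  induction k with
  | zero => simpa [hb0] using hx1
  | succ n ih =>
    rw [Finset.prod_range_succ, hstep (n + 1), ih]
    ring
end

section
/- Fix α > 0 and λ > 0, and sequences (β_k)_{k≥1}, (γ_k)_{k≥1} with β_k, γ_k ∈ [0, 1] satisfying β_{k+1} ≥ β_k and γ_{k+1} ≥ γ_k for all k ≥ 1. Let (b_k)_{k≥0} be defined by b_0 = 0 and b_k = (β_k + γ_k αλ)(1 − 1/(1 + b_{k-1})) + αλ for k ≥ 1. Then b_{k+1} ≥ b_k for all k ≥ 0; that is, (b_k) is nondecreasing. -/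
/-- Fix `α > 0`, `λ > 0`, and sequences `β_k, γ_k ∈ [0,1]` for `k ≥ 1`
with `β_{k+1} ≥ β_k` and `γ_{k+1} ≥ γ_k` for all `k ≥ 1`. Let `b_0 = 0` and
`b_k = (β_k + γ_k αλ)(1 − 1/(1+b_{k-1})) + αλ` for `k ≥ 1`. Then `(b_k)` is
nondecreasing: `b_{k+1} ≥ b_k` for all `k ≥ 0`. -/
theorem stmt_12 (α lam : ℝ) (hα : 0 < α) (hlam : 0 < lam)
    (β γ : ℕ → ℝ)
    (hβ : ∀ k, 1 ≤ k → β k ∈ Set.Icc (0 : ℝ) 1)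
    (hγ : ∀ k, 1 ≤ k → γ k ∈ Set.Icc (0 : ℝ) 1)
    (hβmono : ∀ k, 1 ≤ k → β k ≤ β (k + 1))
    (hγmono : ∀ k, 1 ≤ k → γ k ≤ γ (k + 1))
    (b : ℕ → ℝ) (hb0 : b 0 = 0)
    (hbrec : ∀ k, 1 ≤ k →
      b k = (β k + γ k * α * lam) * (1 - 1 / (1 + b (k - 1))) + α * lam) :
    ∀ k : ℕ, b k ≤ b (k + 1) := by
  have hal : 0 < α * lam := mul_pos hα hlam
  have key : ∀ k : ℕ, 0 ≤ b k ∧ b k ≤ b (k + 1) := by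
    intro k
    induction k with
    | zero =>
      have h1 : b 1 = (β 1 + γ 1 * α * lam) * (1 - 1 / (1 + b 0)) + α * lam :=
        hbrec 1 le_rfl
      rw [hb0] at h1 ⊢
      simp at h1
      constructor
      · exact le_rfl
      · rw [h1]; positivity
    | succ k ih =>
      obtain ⟨hk0, hkmono⟩ := ih
      have hk10 : 0 ≤ b (k + 1) := le_trans hk0 hkmono
      have h1 : b (k + 1) = (β (k + 1) + γ (k + 1) * α * lam) *
          (1 - 1 / (1 + b k)) + α * lam := by
        have := hbrec (k + 1) (Nat.le_add_left 1 k)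
        simpa using this
      have h2 : b (k + 2) = (β (k + 2) + γ (k + 2) * α * lam) *
          (1 - 1 / (1 + b (k + 1))) + α * lam := by
        have := hbrec (k + 2) (by omega)
        simpa using this
      have hβ1 := hβ (k + 1) (by omega)
      have hγ1 := hγ (k + 1) (by omega)
      have hc0 : 0 ≤ β (k + 1) + γ (k + 1) * α * lam := by
        have := hβ1.1; have := hγ1.1; positivity
      have hcmono : β (k + 1) + γ (k + 1) * α * lam ≤
          β (k + 2) + γ (k + 2) * α * lam := by
        have h3 := hβmono (k + 1) (by omega)
        have h4 := hγmono (k + 1) (by omega)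
        have : γ (k + 1) * α * lam ≤ γ (k + 2) * α * lam := by
          have := mul_le_mul_of_nonneg_right
            (mul_le_mul_of_nonneg_right h4 hα.le) hlam.le
          linarith
        linarith
      have hpos1 : (0:ℝ) < 1 + b k := by linarith
      have hpos2 : (0:ℝ) < 1 + b (k + 1) := by linarith
      have hf0 : 0 ≤ 1 - 1 / (1 + b k) := by
        have : 1 / (1 + b k) ≤ 1 := by
          rw [div_le_one hpos1]; linarith
        linarith
      have hfmono : 1 - 1 / (1 + b k) ≤ 1 - 1 / (1 + b (k + 1)) := by
        have : 1 / (1 + b (k + 1)) ≤ 1 / (1 + b k) :=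
          one_div_le_one_div_of_le hpos1 (by linarith)
        linarith
      refine ⟨le_trans hk0 hkmono, ?_⟩
      rw [h1, h2]
      have := mul_le_mul hcmono hfmono hf0 (le_trans hc0 hcmono)
      linarith
  exact fun k => (key k).2
end

section
/- Fix α > 0 and λ > 0, and sequences (β_k)_{k≥1}, (γ_k)_{k≥1} with β_k, γ_k ∈ [0, 1], β_{k+1} ≥ β_k and γ_{k+1} ≥ γ_k for all k, and limits β̄ = lim_{k→∞} β_k and γ̄ = lim_{k→∞} γ_k. Let (b_k)_{k≥0} be defined by b_0 = 0 and b_k = (β_k + γ_k αλ)(1 − 1/(1 + b_{k-1})) + αλ for k ≥ 1. Then (b_k) converges, and lim_{k→∞} b_k = (1/2)(β̄ − 1 + αλ(1 + γ̄)) + (1/2)√((β̄ − 1 + αλ(1 + γ̄))² + 4αλ). -/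
open Filter

/-- Fix `α > 0`, `λ > 0`, and nondecreasing sequences `β_k, γ_k ∈ [0,1]`
with limits `β̄` and `γ̄`. Let `b_0 = 0` and
`b_k = (β_k + γ_k αλ)(1 − 1/(1+b_{k-1})) + αλ` for `k ≥ 1`. Then `(b_k)` converges, and
`lim b_k = (1/2)(β̄ − 1 + αλ(1+γ̄)) + (1/2)√((β̄ − 1 + αλ(1+γ̄))² + 4αλ)`. -/
theorem stmt_13 (α lam : ℝ) (hα : 0 < α) (hlam : 0 < lam)
    (β γ : ℕ → ℝ)
    (hβ : ∀ k, 1 ≤ k → β k ∈ Set.Icc (0 : ℝ) 1)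
    (hγ : ∀ k, 1 ≤ k → γ k ∈ Set.Icc (0 : ℝ) 1)
    (hβmono : ∀ k, 1 ≤ k → β k ≤ β (k + 1))
    (hγmono : ∀ k, 1 ≤ k → γ k ≤ γ (k + 1))
    (βbar γbar : ℝ)
    (hβlim : Tendsto β atTop (nhds βbar))
    (hγlim : Tendsto γ atTop (nhds γbar))
    (b : ℕ → ℝ) (hb0 : b 0 = 0)
    (hbrec : ∀ k, 1 ≤ k →
      b k = (β k + γ k * α * lam) * (1 - 1 / (1 + b (k - 1))) + α * lam) :
    Tendsto b atTop (nhds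
      ((1 / 2) * (βbar - 1 + α * lam * (1 + γbar)) +
        (1 / 2) * Real.sqrt ((βbar - 1 + α * lam * (1 + γbar)) ^ 2 + 4 * α * lam))) := by
  have hc : 0 < α * lam := mul_pos hα hlam
  -- nonnegativity
  have hnn : ∀ k, 0 ≤ b k := by
    intro k
    induction k with
    | zero => rw [hb0]
    | succ n ih =>
      have hrec := hbrec (n+1) (by omega)
      have e1 : n + 1 - 1 = n := rfl
      rw [e1] at hrec
      have h1 : (0:ℝ) < 1 + b n := by linarith
      have h2 : 1 / (1 + b n) ≤ 1 := by
        rw [div_le_one h1]; linarith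
      have hβn := hβ (n+1) (by omega)
      have hγn := hγ (n+1) (by omega)
      have ha : 0 ≤ β (n+1) + γ (n+1) * α * lam :=
        add_nonneg hβn.1 (mul_nonneg (mul_nonneg hγn.1 hα.le) hlam.le)
      have hp : 0 ≤ (β (n+1) + γ (n+1) * α * lam) * (1 - 1 / (1 + b n)) :=
        mul_nonneg ha (by linarith)
      rw [hrec]; linarith
  -- monotonicity
  have hstep : ∀ k, b k ≤ b (k+1) := by
    intro k
    induction k with
    | zero =>
      have hrec := hbrec 1 (by omega)
      have e1 : 1 - 1 = 0 := rfl
      rw [e1, hb0] at hrec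
      norm_num at hrec
      rw [hb0, hrec]; linarith
    | succ n ih =>
      have hr1 := hbrec (n+1) (by omega)
      have hr2 := hbrec (n+2) (by omega)
      have e1 : n + 1 - 1 = n := rfl
      have e2 : n + 2 - 1 = n + 1 := rfl
      rw [e1] at hr1; rw [e2] at hr2
      have hβn := hβ (n+1) (by omega)
      have hγn := hγ (n+1) (by omega)
      have ha1 : 0 ≤ β (n+1) + γ (n+1) * α * lam :=
        add_nonneg hβn.1 (mul_nonneg (mul_nonneg hγn.1 hα.le) hlam.le)
      have ha12 : β (n+1) + γ (n+1) * α * lam ≤ β (n+2) + γ (n+2) * α * lam := by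
        have h1 := hβmono (n+1) (by omega)
        have h2 := hγmono (n+1) (by omega)
        have : γ (n+1) * α * lam ≤ γ (n+2) * α * lam := by
          apply mul_le_mul_of_nonneg_right _ hlam.le
          exact mul_le_mul_of_nonneg_right h2 hα.le
        linarith
      have hpos1 : (0:ℝ) < 1 + b n := by have := hnn n; linarith
      have hpos2 : (0:ℝ) < 1 + b (n+1) := by have := hnn (n+1); linarith
      have ht12 : 1 / (1 + b (n+1)) ≤ 1 / (1 + b n) :=
        one_div_le_one_div_of_le hpos1 (by linarith)
      have ht1 : 0 ≤ 1 - 1 / (1 + b n) := by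
        have : 1 / (1 + b n) ≤ 1 := by rw [div_le_one hpos1]; have := hnn n; linarith
        linarith
      have hmul : (β (n+1) + γ (n+1) * α * lam) * (1 - 1 / (1 + b n)) ≤
          (β (n+2) + γ (n+2) * α * lam) * (1 - 1 / (1 + b (n+1))) :=
        mul_le_mul ha12 (by linarith) ht1 (le_trans ha1 ha12)
      rw [hr1, hr2]; linarith
  have hmono : Monotone b := monotone_nat_of_le_succ hstep
  -- boundedness
  have hbnd : ∀ k, b k ≤ 1 + 2 * (α * lam) := by
    intro k
    match k with
    | 0 => rw [hb0]; linarith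
    | (n+1) =>
      have hrec := hbrec (n+1) (by omega)
      have e1 : n + 1 - 1 = n := rfl
      rw [e1] at hrec
      have hβn := hβ (n+1) (by omega)
      have hγn := hγ (n+1) (by omega)
      have ha : 0 ≤ β (n+1) + γ (n+1) * α * lam :=
        add_nonneg hβn.1 (mul_nonneg (mul_nonneg hγn.1 hα.le) hlam.le)
      have ha2 : β (n+1) + γ (n+1) * α * lam ≤ 1 + α * lam := by
        have : γ (n+1) * α * lam ≤ 1 * α * lam := by
          apply mul_le_mul_of_nonneg_right _ hlam.le
          exact mul_le_mul_of_nonneg_right hγn.2 hα.le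
        have := hβn.2; nlinarith
      have hpos : (0:ℝ) < 1 + b n := by have := hnn n; linarith
      have ht : 1 - 1 / (1 + b n) ≤ 1 := by
        have : 0 ≤ 1 / (1 + b n) := by positivity
        linarith
      have ht0 : 0 ≤ 1 - 1 / (1 + b n) := by
        have : 1 / (1 + b n) ≤ 1 := by rw [div_le_one hpos]; have := hnn n; linarith
        linarith
      have hmul : (β (n+1) + γ (n+1) * α * lam) * (1 - 1 / (1 + b n)) ≤
          (1 + α * lam) * 1 :=
        mul_le_mul ha2 ht ht0 (by linarith)
      rw [hrec]; nlinarith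
  have hbdd : BddAbove (Set.range b) := ⟨1 + 2 * (α * lam), by
    rintro x ⟨k, rfl⟩; exact hbnd k⟩
  have hL : Tendsto b atTop (nhds (⨆ k, b k)) := tendsto_atTop_ciSup hmono hbdd
  set L := ⨆ k, b k with hLdef
  have hLnn : 0 ≤ L := hb0 ▸ le_ciSup hbdd 0
  have h1L : (1:ℝ) + L ≠ 0 := ne_of_gt (by linarith)
  have hL' : Tendsto (fun k => b (k - 1)) atTop (nhds L) :=
    hL.comp (tendsto_sub_atTop_nat 1)
  have hg : Tendsto (fun k => (β k + γ k * α * lam) * (1 - 1 / (1 + b (k - 1))) + α * lam)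
      atTop (nhds ((βbar + γbar * α * lam) * (1 - 1 / (1 + L)) + α * lam)) := by
    exact (((hβlim.add ((hγlim.mul_const α).mul_const lam)).mul
      (tendsto_const_nhds.sub (tendsto_const_nhds.div
        (tendsto_const_nhds.add hL') h1L))).add tendsto_const_nhds)
  have hL2 : Tendsto b atTop (nhds ((βbar + γbar * α * lam) * (1 - 1 / (1 + L)) + α * lam)) := by
    apply hg.congr'
    filter_upwards [eventually_ge_atTop 1] with k hk
    exact (hbrec k hk).symm
  have hLeq : L = (βbar + γbar * α * lam) * (1 - 1 / (1 + L)) + α * lam :=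
    tendsto_nhds_unique hL hL2
  set A := βbar - 1 + α * lam * (1 + γbar) with hAdef
  have hquad : L ^ 2 = A * L + α * lam := by
    field_simp at hLeq
    rw [hAdef]; nlinarith [hLeq]
  set s := Real.sqrt (A ^ 2 + 4 * α * lam) with hsdef
  have hs2 : s ^ 2 = A ^ 2 + 4 * α * lam := Real.sq_sqrt (by nlinarith [sq_nonneg A])
  have hsnn : 0 ≤ s := Real.sqrt_nonneg _
  have key : (2 * L - A - s) * (2 * L - A + s) = 0 := by nlinarith [hquad, hs2]
  have hLval : L = 1 / 2 * A + 1 / 2 * s := by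
    rcases mul_eq_zero.1 key with h | h
    · linarith
    · exfalso; nlinarith
  rw [← hLval]
  exact hL
end

section
/- Fix α > 0 and λ > 0, and a single nondecreasing sequence (β_k)_{k≥1} with β_k ∈ [0, 1] and lim_{k→∞} β_k = 1. Let (b_k)_{k≥0} be defined by b_0 = 0 and b_k = (β_k + β_k αλ)(1 − 1/(1 + b_{k-1})) + αλ for k ≥ 1. Then lim_{k→∞} b_k = αλ + √(αλ)·√(1 + αλ). -/
open Filter

/-- Fix `α > 0`, `λ > 0`, and a nondecreasing sequence `β_k ∈ [0,1]`
with `lim β_k = 1`. Let `b_0 = 0` and `b_k = (β_k + β_k αλ)(1 − 1/(1+b_{k-1})) + αλ`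
for `k ≥ 1` (i.e. `γ_k = β_k`). Then `lim b_k = αλ + √(αλ)·√(1 + αλ)`. -/
theorem stmt_14 (α lam : ℝ) (hα : 0 < α) (hlam : 0 < lam)
    (β : ℕ → ℝ)
    (hβ : ∀ k, 1 ≤ k → β k ∈ Set.Icc (0 : ℝ) 1)
    (hβmono : ∀ k, 1 ≤ k → β k ≤ β (k + 1))
    (hβlim : Tendsto β atTop (nhds 1))
    (b : ℕ → ℝ) (hb0 : b 0 = 0)
    (hbrec : ∀ k, 1 ≤ k →
      b k = (β k + β k * α * lam) * (1 - 1 / (1 + b (k - 1))) + α * lam) :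
    Tendsto b atTop (nhds
      (α * lam + Real.sqrt (α * lam) * Real.sqrt (1 + α * lam))) := by
  set c := α * lam with hcdef
  have hc : 0 < c := mul_pos hα hlam
  set s := Real.sqrt c * Real.sqrt (1 + c) with hsdef
  have hs0 : 0 ≤ s := mul_nonneg (Real.sqrt_nonneg _) (Real.sqrt_nonneg _)
  have hs2 : s ^ 2 = c * (1 + c) := by
    rw [hsdef, mul_pow, Real.sq_sqrt hc.le, Real.sq_sqrt (by linarith)]
  set L := c + s with hLdef
  have hspos : 0 < s := by
    rcases lt_or_eq_of_le hs0 with h | h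
    · exact h
    · exfalso; nlinarith [hs2]
  clear_value c s L
  have hLc : c ≤ L := by rw [hLdef]; linarith
  have hL1 : (0:ℝ) < 1 + L := by linarith
  have hLquad : L ^ 2 = 2 * c * L + c := by rw [hLdef]; linear_combination hs2
  -- rewritten recursion
  have hrec' : ∀ k, b (k+1) = (β (k+1) + β (k+1) * c) * (1 - 1 / (1 + b k)) + c := by
    intro k
    have h := hbrec (k+1) (Nat.le_add_left 1 k)
    simpa [hcdef, mul_assoc] using h
  -- fixed point identity
  have hfix : (1 + c) * (1 - 1 / (1 + L)) + c = L := by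
    field_simp
    linear_combination -hLquad
  -- key invariant
  have key : ∀ k, 0 ≤ b k ∧ b k ≤ L ∧ b k ≤ b (k + 1) := by
    intro k
    induction k with
    | zero =>
      have h1 : b 1 = c := by
        have := hrec' 0
        simp [hb0] at this
        linarith
      exact ⟨by simp [hb0], by simp [hb0]; nlinarith, by simp [hb0, h1]; linarith⟩
    | succ k ih =>
      obtain ⟨hbk0, hbkL, hbkm⟩ := ih
      have hβ1 := hβ (k+1) (Nat.le_add_left 1 k)
      have hβ2 := hβ (k+2) (Nat.le_add_left 1 (k+1))
      have hβm := hβmono (k+1) (Nat.le_add_left 1 k)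
      obtain ⟨hβ1a, hβ1b⟩ := hβ1
      obtain ⟨hβ2a, hβ2b⟩ := hβ2
      have hd1 : (0:ℝ) < 1 + b k := by linarith
      have hd2 : (0:ℝ) < 1 + b (k+1) := by linarith
      have hg1 : 0 ≤ 1 - 1 / (1 + b k) := by
        have : 1 / (1 + b k) ≤ 1 := by rw [div_le_one hd1]; linarith
        linarith
      have hg2 : 1 - 1 / (1 + b k) ≤ 1 - 1 / (1 + b (k+1)) := by
        have : 1 / (1 + b (k+1)) ≤ 1 / (1 + b k) :=
          one_div_le_one_div_of_le hd1 (by linarith)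
        linarith
      have hgL : 1 - 1 / (1 + b (k+1)) ≤ 1 - 1 / (1 + L) := by
        have hbk1L : b (k+1) ≤ L := by
          rw [hrec' k]
          have hA : β (k+1) + β (k+1) * c ≤ 1 + c := by linarith [mul_le_mul_of_nonneg_right hβ1b hc.le, hβ1b]
          have hA0 : 0 ≤ β (k+1) + β (k+1) * c := by linarith [mul_nonneg hβ1a hc.le, hβ1a]
          have hgkL : 1 - 1 / (1 + b k) ≤ 1 - 1 / (1 + L) := by
            have : 1 / (1 + L) ≤ 1 / (1 + b k) :=
              one_div_le_one_div_of_le hd1 (by linarith)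
            linarith
          have gL0 : 0 ≤ 1 - 1 / (1 + L) := by
            have : 1 / (1 + L) ≤ 1 := by rw [div_le_one hL1]; linarith
            linarith
          calc (β (k+1) + β (k+1) * c) * (1 - 1 / (1 + b k)) + c
              ≤ (1 + c) * (1 - 1 / (1 + L)) + c := by
                have := mul_le_mul hA hgkL hg1 (by linarith)
                linarith
            _ = L := hfix
        have : 1 / (1 + L) ≤ 1 / (1 + b (k+1)) :=
          one_div_le_one_div_of_le hd2 (by linarith)
        linarith
      have hbk1L : b (k+1) ≤ L := by
        -- proven above inside; redo quickly
        rw [hrec' k]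
        have hA : β (k+1) + β (k+1) * c ≤ 1 + c := by linarith [mul_le_mul_of_nonneg_right hβ1b hc.le, hβ1b]
        have gL0 : 0 ≤ 1 - 1 / (1 + L) := by
          have : 1 / (1 + L) ≤ 1 := by rw [div_le_one hL1]; linarith
          linarith
        have hgkL : 1 - 1 / (1 + b k) ≤ 1 - 1 / (1 + L) := by
          have : 1 / (1 + L) ≤ 1 / (1 + b k) :=
            one_div_le_one_div_of_le hd1 (by linarith)
          linarith
        calc (β (k+1) + β (k+1) * c) * (1 - 1 / (1 + b k)) + c
            ≤ (1 + c) * (1 - 1 / (1 + L)) + c := by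
              have := mul_le_mul hA hgkL hg1 (by linarith)
              linarith
          _ = L := hfix
      have hbk10 : 0 ≤ b (k+1) := by
        rw [hrec' k]
        have hA0 : 0 ≤ β (k+1) + β (k+1) * c := by linarith [mul_nonneg hβ1a hc.le, hβ1a]
        linarith [mul_nonneg hA0 hg1]
      refine ⟨hbk10, hbk1L, ?_⟩
      rw [hrec' k, hrec' (k+1)]
      have hA0 : 0 ≤ β (k+1) + β (k+1) * c := by linarith [mul_nonneg hβ1a hc.le, hβ1a]
      have hAm : β (k+1) + β (k+1) * c ≤ β (k+2) + β (k+2) * c := by linarith [mul_le_mul_of_nonneg_right hβm hc.le, hβm]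
      have hg20 : 0 ≤ 1 - 1 / (1 + b (k+1)) := by
        have : 1 / (1 + b (k+1)) ≤ 1 := by rw [div_le_one hd2]; linarith
        linarith
      have := mul_le_mul hAm hg2 hg1 (by linarith [mul_nonneg hβ2a hc.le, hβ2a])
      linarith
  have hmono : Monotone b := monotone_nat_of_le_succ fun k => (key k).2.2
  have hbdd : BddAbove (Set.range b) := by
    refine ⟨L, ?_⟩
    rintro x ⟨k, rfl⟩
    exact (key k).2.1
  have hℓ : Tendsto b atTop (nhds (⨆ k, b k)) := tendsto_atTop_ciSup hmono hbdd
  set ℓ := ⨆ k, b k with hℓdef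
  clear_value ℓ
  have hb1 : b 1 = c := by
    have := hrec' 0
    simp [hb0] at this
    linarith
  have hℓc : c ≤ ℓ := by rw [hℓdef, ← hb1]; exact le_ciSup hbdd 1
  have hℓd : (0:ℝ) < 1 + ℓ := by linarith
  -- pass to the limit in the recursion
  have hshift : Tendsto (fun k => b (k+1)) atTop (nhds ℓ) :=
    hℓ.comp (tendsto_add_atTop_nat 1)
  have hβshift : Tendsto (fun k => β (k+1)) atTop (nhds 1) :=
    hβlim.comp (tendsto_add_atTop_nat 1)
  have hrhs : Tendsto (fun k => (β (k+1) + β (k+1) * c) * (1 - 1 / (1 + b k)) + c)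
      atTop (nhds ((1 + 1 * c) * (1 - 1 / (1 + ℓ)) + c)) := by
    have hfrac : Tendsto (fun k => 1 / (1 + b k)) atTop (nhds (1 / (1 + ℓ))) :=
      tendsto_const_nhds.div (tendsto_const_nhds.add hℓ) (ne_of_gt hℓd)
    exact (((hβshift.add (hβshift.mul_const c)).mul
      (tendsto_const_nhds.sub hfrac)).add tendsto_const_nhds)
  have heq : ℓ = (1 + 1 * c) * (1 - 1 / (1 + ℓ)) + c := by
    refine tendsto_nhds_unique hshift ?_
    have : (fun k => b (k+1)) =
        fun k => (β (k+1) + β (k+1) * c) * (1 - 1 / (1 + b k)) + c := by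
      funext k; exact hrec' k
    rw [this]
    exact hrhs
  have hquad : ℓ ^ 2 = 2 * c * ℓ + c := by
    have h := heq
    field_simp at h
    nlinarith [h]
  have hfact : (ℓ - L) * (ℓ + L - 2 * c) = 0 := by linear_combination hquad - hLquad
  have hfinal : ℓ = L := by
    rcases mul_eq_zero.mp hfact with h | h
    · linarith
    · exfalso; rw [hLdef] at h; linarith
  rwa [hfinal] at hℓ
end

section
/- Fix α > 0 and λ > 0 with αλ ≤ 1, and let γ_k = 0 and β_k = 1 − αλ for all k ≥ 1. Let (b_k)_{k≥0} be defined by b_0 = 0 and b_k = (1 − αλ)(1 − 1/(1 + b_{k-1})) + αλ for k ≥ 1. Then lim_{k→∞} b_k = √(αλ). -/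
open Filter

/-- Fix `α > 0` and `λ > 0` with `αλ ≤ 1`, and let `γ_k = 0`,
`β_k = 1 − αλ` for all `k ≥ 1`. Let `b_0 = 0` and
`b_k = (1 − αλ)(1 − 1/(1+b_{k-1})) + αλ` for `k ≥ 1`. Then `lim b_k = √(αλ)`. -/
theorem stmt_15 (α lam : ℝ) (hα : 0 < α) (hlam : 0 < lam) (hαlam : α * lam ≤ 1)
    (b : ℕ → ℝ) (hb0 : b 0 = 0)
    (hbrec : ∀ k, 1 ≤ k →
      b k = (1 - α * lam) * (1 - 1 / (1 + b (k - 1))) + α * lam) :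
    Tendsto b atTop (nhds (Real.sqrt (α * lam))) := by
  set c := α * lam with hc
  have hc0 : 0 < c := mul_pos hα hlam
  have hrec : ∀ k : ℕ, b (k + 1) = (1 - c) * (1 - 1 / (1 + b k)) + c := by
    intro k
    simpa using hbrec (k + 1) (by omega)
  set s := Real.sqrt c with hsdef
  have hs0 : 0 < s := Real.sqrt_pos.mpr hc0
  have hs : s ^ 2 = c := Real.sq_sqrt hc0.le
  have hnn : ∀ k, 0 ≤ b k := by
    intro k
    induction k with
    | zero => rw [hb0]
    | succ n ih =>
      rw [hrec]
      have h1 : (0:ℝ) < 1 + b n := by linarith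
      have h2 : 1 / (1 + b n) ≤ 1 := by
        rw [div_le_one h1]; linarith
      have h3 : (0:ℝ) ≤ 1 - c := by linarith
      nlinarith
  have fmono : ∀ x y : ℝ, 0 ≤ x → x ≤ y →
      (1 - c) * (1 - 1 / (1 + x)) + c ≤ (1 - c) * (1 - 1 / (1 + y)) + c := by
    intro x y hx hxy
    have hx1 : (0:ℝ) < 1 + x := by linarith
    have h : 1 / (1 + y) ≤ 1 / (1 + x) := one_div_le_one_div_of_le hx1 (by linarith)
    have h3 : (0:ℝ) ≤ 1 - c := by linarith
    nlinarith
  have hfix : (1 - c) * (1 - 1 / (1 + s)) + c = s := by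
    have h1 : (1:ℝ) + s ≠ 0 := by positivity
    field_simp
    nlinarith [hs]
  have hub : ∀ k, b k ≤ s := by
    intro k
    induction k with
    | zero => rw [hb0]; exact hs0.le
    | succ n ih =>
      rw [hrec]
      calc (1 - c) * (1 - 1 / (1 + b n)) + c
          ≤ (1 - c) * (1 - 1 / (1 + s)) + c := fmono _ _ (hnn n) ih
        _ = s := hfix
  have hmono : Monotone b := by
    apply monotone_nat_of_le_succ
    intro k
    induction k with
    | zero =>
      rw [hb0, hrec, hb0]
      norm_num
      exact hc0.le
    | succ n ih =>
      rw [hrec, hrec]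
      exact fmono _ _ (hnn n) ih
  have hbdd : BddAbove (Set.range b) := ⟨s, by rintro _ ⟨k, rfl⟩; exact hub k⟩
  set L := ⨆ k, b k with hLdef
  have hB : Tendsto b atTop (nhds L) := tendsto_atTop_ciSup hmono hbdd
  have hLc : c ≤ L := by
    have h1 : b 1 = c := by rw [hrec 0, hb0]; norm_num
    calc c = b 1 := h1.symm
      _ ≤ L := le_ciSup hbdd 1
  have hL0 : 0 < L := lt_of_lt_of_le hc0 hLc
  have hL1 : (1:ℝ) + L ≠ 0 := by positivity
  -- pass to the limit in the recurrence
  have h1 : Tendsto (fun k => 1 + b k) atTop (nhds (1 + L)) :=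
    tendsto_const_nhds.add hB
  have h2 : Tendsto (fun k => 1 / (1 + b k)) atTop (nhds (1 / (1 + L))) :=
    tendsto_const_nhds.div h1 hL1
  have h3 : Tendsto (fun k => (1 - c) * (1 - 1 / (1 + b k)) + c) atTop
      (nhds ((1 - c) * (1 - 1 / (1 + L)) + c)) :=
    ((tendsto_const_nhds.sub h2).const_mul (1 - c)).add tendsto_const_nhds
  have h4 : Tendsto (fun k => b (k + 1)) atTop (nhds L) :=
    hB.comp (tendsto_add_atTop_nat 1)
  have h5 : Tendsto (fun k => b (k + 1)) atTop
      (nhds ((1 - c) * (1 - 1 / (1 + L)) + c)) := by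
    have : (fun k => b (k + 1)) = fun k => (1 - c) * (1 - 1 / (1 + b k)) + c := by
      funext k; exact hrec k
    rw [this]; exact h3
  have hLfix : (1 - c) * (1 - 1 / (1 + L)) + c = L := tendsto_nhds_unique h5 h4
  have hLsq : L ^ 2 = c := by
    have h1L : (0:ℝ) < 1 + L := by linarith
    field_simp at hLfix
    nlinarith [hLfix]
  have hLs : L = s := by nlinarith [hs, hLsq, hs0, hL0]
  rw [← hLs]
  exact hB
end
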